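/- Let p be an odd prime and f(x0,x1,x2) = x0^4 + p·x1^4 + x2^4 - 2·x0^2·x2^2 - x0·x1^2·x2 over ℂ. The singular locus of the plane quartic curve C' = {f = 0} ⊂ P^2(ℂ) consists exactly of the two points [1,0,1] and [1,0,-1]. That is, a point [x0,x1,x2] satisfies f = ∂f/∂x0 = ∂f/∂x1 = ∂f/∂x2 = 0 if and only if it equals [1,0,1] or [1,0,-1]. -/

import Mathlib

/-!
Off the line `x1 = 0` the equation `∂f/∂x1 = 0` gives `x0 x2 = 2p x1²`; substituting this
into `f = 0` and `x0 ∂f/∂x0 = 0` yields `(x0² - x2²)² = p x1⁴` and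
`(x0² - x2²)(x0² + x2²) = 0`. The first factor would force `p x1⁴ = 0`. The second gives
`p x1⁴ = 4 x0⁴`, and squaring `x0 x2 = 2p x1²` then gives `(16p + 1) x0⁴ = 0`, so again
`p x1⁴ = 0`. On the line `x1 = 0` the curve is `(x0² - x2²)² = 0`, i.e. `x2 = ±x0`.
-/

section QuarticSingularities

variable {K : Type*} [Field K] {a x0 x1 x2 : K}

theorem x1_eq_zero_of_quartic_singular (ha : a ≠ 0) (h16 : 16 * a + 1 ≠ 0) (h2 : (2 : K) ≠ 0)
    (hf : x0 ^ 4 + a * x1 ^ 4 + x2 ^ 4 - 2 * x0 ^ 2 * x2 ^ 2 - x0 * x1 ^ 2 * x2 = 0)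
    (hd0 : 4 * x0 ^ 3 - 4 * x0 * x2 ^ 2 - x1 ^ 2 * x2 = 0)
    (hd1 : 4 * a * x1 ^ 3 - 2 * x0 * x1 * x2 = 0) :
    x1 = 0 := by
  by_contra hx1
  have hx1' : a * x1 ^ 4 ≠ 0 := mul_ne_zero ha (pow_ne_zero 4 hx1)
  have hx0x2 : x0 * x2 = 2 * a * x1 ^ 2 := by
    have h : x1 * 2 * (2 * a * x1 ^ 2 - x0 * x2) = 0 := by linear_combination hd1
    exact (sub_eq_zero.mp ((mul_eq_zero.mp h).resolve_left (mul_ne_zero hx1 h2))).symm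
  have hF : (x0 ^ 2 - x2 ^ 2) ^ 2 = a * x1 ^ 4 := by linear_combination hf + x1 ^ 2 * hx0x2
  have hprod : (x0 ^ 2 - x2 ^ 2) * (x0 ^ 2 + x2 ^ 2) = 0 := by
    have h : 2 * ((x0 ^ 2 - x2 ^ 2) * (x0 ^ 2 + x2 ^ 2)) = 0 := by
      linear_combination x0 * hd0 + x1 ^ 2 * hx0x2 - 2 * hF
    exact (mul_eq_zero.mp h).resolve_left h2
  rcases mul_eq_zero.mp hprod with h | h
  · exact hx1' (by linear_combination (x0 ^ 2 - x2 ^ 2) * h - hF)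
  · have hax1 : a * x1 ^ 4 = 4 * x0 ^ 4 := by linear_combination -hF - (3 * x0 ^ 2 - x2 ^ 2) * h
    have hzero : (16 * a + 1) * x0 ^ 4 = 0 := by
      linear_combination -(x0 * x2 + 2 * a * x1 ^ 2) * hx0x2 + x0 ^ 2 * h - 4 * a * hax1
    have hx0 : x0 = 0 :=
      pow_eq_zero_iff four_ne_zero |>.mp ((mul_eq_zero.mp hzero).resolve_left h16)
    exact hx1' (by rw [hax1, hx0]; ring)

theorem quartic_singular_iff (ha : a ≠ 0) (h16 : 16 * a + 1 ≠ 0) (h2 : (2 : K) ≠ 0)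
    (hne : ¬(x0 = 0 ∧ x1 = 0 ∧ x2 = 0)) :
    (x0 ^ 4 + a * x1 ^ 4 + x2 ^ 4 - 2 * x0 ^ 2 * x2 ^ 2 - x0 * x1 ^ 2 * x2 = 0 ∧
        4 * x0 ^ 3 - 4 * x0 * x2 ^ 2 - x1 ^ 2 * x2 = 0 ∧
        4 * a * x1 ^ 3 - 2 * x0 * x1 * x2 = 0 ∧
        4 * x2 ^ 3 - 4 * x0 ^ 2 * x2 - x0 * x1 ^ 2 = 0) ↔
      ∃ c : K, c ≠ 0 ∧
        ((x0 = c ∧ x1 = 0 ∧ x2 = c) ∨ (x0 = c ∧ x1 = 0 ∧ x2 = -c)) := by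
  constructor
  · rintro ⟨hf, hd0, hd1, -⟩
    obtain rfl := x1_eq_zero_of_quartic_singular ha h16 h2 hf hd0 hd1
    have hsq : x2 ^ 2 = x0 ^ 2 := by
      have h : (x0 ^ 2 - x2 ^ 2) ^ 2 = 0 := by linear_combination hf
      linear_combination -(pow_eq_zero_iff two_ne_zero |>.mp h)
    have hx0 : x0 ≠ 0 := by
      rintro rfl
      exact hne ⟨rfl, rfl, pow_eq_zero_iff two_ne_zero |>.mp (by simpa using hsq)⟩
    rcases sq_eq_sq_iff_eq_or_eq_neg.mp hsq with h | h
    · exact ⟨x0, hx0, .inl ⟨rfl, rfl, h⟩⟩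
    · exact ⟨x0, hx0, .inr ⟨rfl, rfl, h⟩⟩
  · rintro ⟨c, -, ⟨rfl, rfl, rfl⟩ | ⟨rfl, rfl, rfl⟩⟩ <;>
      exact ⟨by ring, by ring, by ring, by ring⟩

end QuarticSingularities

theorem stmt4_general (p : ℕ) (hp : p.Prime) :
    ∀ x0 x1 x2 : ℂ, ¬(x0 = 0 ∧ x1 = 0 ∧ x2 = 0) →
      ((x0 ^ 4 + p * x1 ^ 4 + x2 ^ 4 - 2 * x0 ^ 2 * x2 ^ 2 - x0 * x1 ^ 2 * x2 = 0 ∧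
        4 * x0 ^ 3 - 4 * x0 * x2 ^ 2 - x1 ^ 2 * x2 = 0 ∧
        4 * p * x1 ^ 3 - 2 * x0 * x1 * x2 = 0 ∧
        4 * x2 ^ 3 - 4 * x0 ^ 2 * x2 - x0 * x1 ^ 2 = 0) ↔
       ∃ c : ℂ, c ≠ 0 ∧
        ((x0 = c ∧ x1 = 0 ∧ x2 = c) ∨ (x0 = c ∧ x1 = 0 ∧ x2 = -c))) := by
  have h16 : 16 * (p : ℂ) + 1 ≠ 0 := by exact_mod_cast Nat.succ_ne_zero (16 * p)
  exact fun _ _ _ => quartic_singular_iff (Nat.cast_ne_zero.mpr hp.ne_zero) h16 two_ne_zero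

/-- The singular locus of the plane quartic
`C' = {x0⁴ + p·x1⁴ + x2⁴ - 2x0²x2² - x0x1²x2 = 0} ⊂ ℙ²(ℂ)` consists exactly of the two
points `[1,0,1]` and `[1,0,-1]`: for a nonzero `(x0,x1,x2)`, the equation and all three
partial derivatives vanish iff the point is `[1,0,1]` or `[1,0,-1]`. -/
theorem stmt4 (p : ℕ) (hp : p.Prime) (hodd : Odd p) :
    ∀ x0 x1 x2 : ℂ, ¬(x0 = 0 ∧ x1 = 0 ∧ x2 = 0) →
      ((x0 ^ 4 + p * x1 ^ 4 + x2 ^ 4 - 2 * x0 ^ 2 * x2 ^ 2 - x0 * x1 ^ 2 * x2 = 0 ∧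
        4 * x0 ^ 3 - 4 * x0 * x2 ^ 2 - x1 ^ 2 * x2 = 0 ∧
        4 * p * x1 ^ 3 - 2 * x0 * x1 * x2 = 0 ∧
        4 * x2 ^ 3 - 4 * x0 ^ 2 * x2 - x0 * x1 ^ 2 = 0) ↔
       ∃ c : ℂ, c ≠ 0 ∧
        ((x0 = c ∧ x1 = 0 ∧ x2 = c) ∨ (x0 = c ∧ x1 = 0 ∧ x2 = -c))) :=
  stmt4_general p hp
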